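/- arXiv:2506.09112 — 8 statements merged into one kernel-verified Lean document; each statement's English description precedes it below -/
import Mathlib

section
/- If P(z) = Σ_{j=0}^m a_j z^j is a polynomial of degree m with real coefficients satisfying a_m ≥ a_{m-1} ≥ ... ≥ a_1 ≥ a_0 > 0, then every complex zero z of P satisfies |z| ≤ 1. -/
/-!
Multiplying by `z - 1` telescopes the coefficients:
`(z - 1) P(z) = a_m z^{m+1} - (a_0 + ∑_{j<m} (a_{j+1} - a_j) z^{j+1})`.
The bracket has nonnegative coefficients summing to `a_m`, so for `|z| > 1` its modulus is at
most `a_m |z|^m < a_m |z|^{m+1}`, and `P(z)` cannot vanish.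
-/

open Finset

theorem sub_one_mul_sum_range_succ {R : Type*} [CommRing R] (a : ℕ → R) (z : R) (m : ℕ) :
    (z - 1) * ∑ j ∈ range (m + 1), a j * z ^ j =
      a m * z ^ (m + 1) - (a 0 + ∑ j ∈ range m, (a (j + 1) - a j) * z ^ (j + 1)) := by
  induction m with
  | zero => simp only [zero_add, range_one, sum_singleton, range_zero, sum_empty]; ring
  | succ m ih => rw [sum_range_succ, mul_add, ih, sum_range_succ]; ring

theorem norm_sum_ofReal_mul_pow_succ_le {n : ℕ} {c : ℕ → ℝ} (hc : ∀ j < n, 0 ≤ c j) {z : ℂ}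
    (hz : 1 ≤ ‖z‖) :
    ‖∑ j ∈ range n, (c j : ℂ) * z ^ (j + 1)‖ ≤ (∑ j ∈ range n, c j) * ‖z‖ ^ n := by
  rw [sum_mul]
  refine (norm_sum_le _ _).trans (sum_le_sum fun j hj => ?_)
  have hj : j < n := mem_range.mp hj
  rw [norm_mul, norm_pow, Complex.norm_real, Real.norm_of_nonneg (hc j hj)]
  exact mul_le_mul_of_nonneg_left (pow_le_pow_right₀ hz hj) (hc j hj)

theorem norm_telescoped_le {m : ℕ} {a : ℕ → ℝ} (h0 : 0 ≤ a 0)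
    (hmono : ∀ j < m, a j ≤ a (j + 1)) {z : ℂ} (hz : 1 ≤ ‖z‖) :
    ‖(a 0 : ℂ) + ∑ j ∈ range m, ((a (j + 1) : ℂ) - a j) * z ^ (j + 1)‖ ≤ a m * ‖z‖ ^ m := by
  have hdiff := norm_sum_ofReal_mul_pow_succ_le (c := fun j => a (j + 1) - a j)
    (fun j hj => sub_nonneg.mpr (hmono j hj)) hz
  push_cast at hdiff
  calc _ ≤ ‖(a 0 : ℂ)‖ + ‖∑ j ∈ range m, ((a (j + 1) : ℂ) - a j) * z ^ (j + 1)‖ :=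
        norm_add_le _ _
    _ ≤ a 0 * ‖z‖ ^ m + (∑ j ∈ range m, (a (j + 1) - a j)) * ‖z‖ ^ m := by
        rw [Complex.norm_real, Real.norm_of_nonneg h0]
        exact add_le_add (le_mul_of_one_le_right h0 (one_le_pow₀ hz)) hdiff
    _ = a m * ‖z‖ ^ m := by rw [sum_range_sub, ← add_mul, add_sub_cancel]

/-- Eneström–Kakeya Theorem: if the real coefficients of `p(z) = ∑_{j=0}^m a_j z^j`
satisfy `a_m ≥ a_{m-1} ≥ ⋯ ≥ a_1 ≥ a_0 > 0`, then every complex zero `z` of `p`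
satisfies `|z| ≤ 1`. -/
theorem enestrom_kakeya (m : ℕ) (a : ℕ → ℝ)
    (hpos : 0 < a 0)
    (hmono : ∀ j < m, a j ≤ a (j + 1))
    (z : ℂ) (hz : ∑ j ∈ Finset.range (m + 1), (a j : ℂ) * z ^ j = 0) :
    ‖z‖ ≤ 1 := by
  by_contra! hr
  have hid := sub_one_mul_sum_range_succ (fun j => (a j : ℂ)) z m
  rw [hz, mul_zero, eq_comm, sub_eq_zero] at hid
  have ham : 0 < a m := by
    have := sum_nonneg fun j (hj : j ∈ range m) => sub_nonneg.mpr (hmono j (mem_range.mp hj))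
    rw [sum_range_sub] at this
    linarith
  have hle : a m * ‖z‖ ^ (m + 1) ≤ a m * ‖z‖ ^ m := by
    have := norm_telescoped_le hpos.le hmono hr.le
    rwa [← hid, norm_mul, norm_pow, Complex.norm_real, Real.norm_of_nonneg ham.le] at this
  have hlt : a m * ‖z‖ ^ m < a m * ‖z‖ ^ (m + 1) :=
    mul_lt_mul_of_pos_left (pow_lt_pow_right₀ hr m.lt_succ_self) ham
  exact hle.not_gt hlt
end

section
/- Let 𝒫_k denote the k-th Pell number defined by 𝒫_0 = 0, 𝒫_1 = 1, and 𝒫_m = 2𝒫_{m-1} + 𝒫_{m-2} for m ≥ 2. Then for every m ≥ 1, Σ_{k=0}^m C(2m, m+k) 𝒫_k² = 2^{3(m-1)}, where C(n, r) denotes the binomial coefficient. -/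
/-- Pell numbers. -/
def pell : ℕ → ℕ
  | 0 => 0
  | 1 => 1
  | (n + 2) => 2 * pell (n + 1) + pell n

open Finset Zsqrtd

private lemma aux_split {R : Type} [CommRing R] (x y : R) (hxy : x * y = 1) (m : ℕ) :
    x ^ m * ∑ k ∈ range (m + 1), (Nat.choose (2 * m) (m + k) : R) * (x ^ k + y ^ k)
      = (1 + x) ^ (2 * m) + x ^ m * (Nat.choose (2 * m) m : R) := by
  have hbin : (1 + x) ^ (2 * m) = ∑ j ∈ range (2 * m + 1), (Nat.choose (2 * m) j : R) * x ^ j := by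
    rw [add_comm, add_pow]
    refine Finset.sum_congr rfl fun j hj => by ring
  have hsplit : (2 * m + 1) = m + (m + 1) := by ring
  have h1 : ∑ j ∈ range m, (Nat.choose (2 * m) j : R) * x ^ j
      = ∑ k ∈ range m, (Nat.choose (2 * m) (m + 1 + k) : R) * (x ^ m * y ^ (k + 1)) := by
    rw [← Finset.sum_range_reflect]
    refine Finset.sum_congr rfl fun k hk => ?_
    have hk' : k < m := Finset.mem_range.mp hk
    have hc : Nat.choose (2 * m) (m - 1 - k) = Nat.choose (2 * m) (m + 1 + k) := by
      rw [← Nat.choose_symm (by omega : m + 1 + k ≤ 2 * m)]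
      congr 1
      omega
    have hp : x ^ m * y ^ (k + 1) = x ^ (m - 1 - k) := by
      have h1 : m - 1 - k + (k + 1) = m := by omega
      calc x ^ m * y ^ (k + 1) = x ^ (m - 1 - k) * (x * y) ^ (k + 1) := by
            rw [mul_pow, ← mul_assoc, ← pow_add, h1]
        _ = x ^ (m - 1 - k) := by rw [hxy, one_pow, mul_one]
    rw [hc, hp]
  have h2 : x ^ m * ∑ k ∈ range (m + 1), (Nat.choose (2 * m) (m + k) : R) * (x ^ k + y ^ k)
      = (∑ k ∈ range (m + 1), (Nat.choose (2 * m) (m + k) : R) * x ^ (m + k))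
        + (∑ k ∈ range (m + 1), (Nat.choose (2 * m) (m + k) : R) * (x ^ m * y ^ k)) := by
    rw [Finset.mul_sum, ← Finset.sum_add_distrib]
    refine Finset.sum_congr rfl fun k _ => ?_
    rw [pow_add]; ring
  have h3 : ∑ k ∈ range (m + 1), (Nat.choose (2 * m) (m + k) : R) * (x ^ m * y ^ k)
      = (∑ k ∈ range m, (Nat.choose (2 * m) (m + 1 + k) : R) * (x ^ m * y ^ (k + 1)))
        + (Nat.choose (2 * m) m : R) * x ^ m := by
    rw [Finset.sum_range_succ']
    simp only [pow_zero, mul_one, Nat.add_zero]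
    refine congrArg₂ _ (Finset.sum_congr rfl fun k _ => ?_) rfl
    rw [show m + (k + 1) = m + 1 + k from by omega]
  conv_rhs => rw [hbin, hsplit, Finset.sum_range_add]
  rw [h2, h3, h1]
  ring
private noncomputable def α : ℤ√2 := ⟨1, 1⟩
private noncomputable def β : ℤ√2 := ⟨1, -1⟩

private lemma diff_pow (k : ℕ) : α ^ k - β ^ k = ⟨0, 2 * pell k⟩ := by
  induction k using Nat.twoStepInduction with
  | zero => ext <;> simp [pell]
  | one =>
    simp only [pow_one, pell]
    ext <;> simp [α, β]
  | more n ih1 ih2 =>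
    have hα : α ^ (n + 2) = 2 * α ^ (n + 1) + α ^ n := by
      have : α ^ 2 = 2 * α + 1 := by ext <;> simp [α, sq] <;> ring
      calc α ^ (n + 2) = α ^ n * α ^ 2 := by ring
        _ = 2 * α ^ (n + 1) + α ^ n := by rw [this]; ring
    have hβ : β ^ (n + 2) = 2 * β ^ (n + 1) + β ^ n := by
      have : β ^ 2 = 2 * β + 1 := by ext <;> simp [β, sq] <;> ring
      calc β ^ (n + 2) = β ^ n * β ^ 2 := by ring
        _ = 2 * β ^ (n + 1) + β ^ n := by rw [this]; ring
    have hp : (pell (n + 2) : ℤ) = 2 * pell (n + 1) + pell n := by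
      rw [show pell (n + 2) = 2 * pell (n + 1) + pell n from rfl]
      push_cast; ring
    rw [hα, hβ, show 2 * α ^ (n+1) + α ^ n - (2 * β ^ (n+1) + β ^ n)
        = 2 * (α ^ (n+1) - β ^ (n+1)) + (α ^ n - β ^ n) by ring, ih1, ih2]
    ext <;> simp [hp] <;> ring

private lemma key_identity (k : ℕ) :
    ((8 * pell k ^ 2 : ℕ) : ℤ√2) = (α ^ 2) ^ k + (β ^ 2) ^ k - 2 * (-1 : ℤ√2) ^ k := by
  have hαβ : α * β = -1 := by ext <;> simp [α, β]
  have hsq : (α ^ k - β ^ k) ^ 2 = (α ^ 2) ^ k + (β ^ 2) ^ k - 2 * (-1 : ℤ√2) ^ k := by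
    rw [← hαβ, mul_pow]
    ring
  rw [← hsq, diff_pow]
  ext <;> simp [sq] <;> push_cast <;> ring

/-- `∑_{k=0}^m C(2m, m+k) 𝒫_k² = 2^{3(m-1)}` for every `m ≥ 1`. -/
theorem pell_binomial_sum (m : ℕ) (hm : 1 ≤ m) :
    ∑ k ∈ Finset.range (m + 1), Nat.choose (2 * m) (m + k) * pell k ^ 2
      = 2 ^ (3 * (m - 1)) := by
  have hαβ : α * β = -1 := by ext <;> simp [α, β]
  have hxy : (α ^ 2) * (β ^ 2) = 1 := by rw [← mul_pow, hαβ]; ring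
  have h8 : (1 + α ^ 2) ^ (2 * m) = 8 ^ m * (α ^ 2) ^ m := by
    have h : (1 + α ^ 2) ^ 2 = 8 * α ^ 2 := by ext <;> simp [α, sq] <;> ring
    calc (1 + α ^ 2) ^ (2 * m) = ((1 + α ^ 2) ^ 2) ^ m := by rw [← pow_mul]
      _ = (8 * α ^ 2) ^ m := by rw [h]
      _ = 8 ^ m * (α ^ 2) ^ m := by rw [mul_pow]
  have hu : (α ^ 2) ^ m * (β ^ 2) ^ m = 1 := by rw [← mul_pow, hxy, one_pow]
  have hS := aux_split (α ^ 2) (β ^ 2) hxy m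
  rw [h8] at hS
  have hcancel : ∑ k ∈ range (m + 1), (Nat.choose (2 * m) (m + k) : ℤ√2)
      * ((α ^ 2) ^ k + (β ^ 2) ^ k) = 8 ^ m + (Nat.choose (2 * m) m : ℤ√2) := by
    have h := congrArg (fun z => (β ^ 2) ^ m * z) hS
    simp only [← mul_assoc] at h
    rw [mul_comm ((β ^ 2) ^ m) ((α ^ 2) ^ m), hu, one_mul] at h
    rw [h]
    linear_combination (8 ^ m + ((Nat.choose (2 * m) m : ℤ√2))) * hu
  have hW := aux_split (-1 : ℤ√2) (-1) (by ring) m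
  have hzero : ((1 : ℤ√2) + -1) ^ (2 * m) = 0 := by
    rw [add_neg_cancel, zero_pow]
    omega
  rw [hzero, zero_add] at hW
  have hWcancel : ∑ k ∈ range (m + 1), (Nat.choose (2 * m) (m + k) : ℤ√2)
      * ((-1 : ℤ√2) ^ k + (-1) ^ k) = (Nat.choose (2 * m) m : ℤ√2) := by
    have hu1 : (-1 : ℤ√2) ^ m * (-1) ^ m = 1 := by
      rw [← mul_pow]; simp
    have h := congrArg (fun z => (-1 : ℤ√2) ^ m * z) hW
    rw [← mul_assoc, hu1, one_mul, ← mul_assoc, hu1, one_mul] at h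
    exact h
  have main : ((∑ k ∈ Finset.range (m + 1),
      Nat.choose (2 * m) (m + k) * pell k ^ 2) * 8 : ℕ) = ((8 ^ m : ℕ) : ℤ√2) := by
    push_cast
    rw [Finset.sum_mul]
    have hterm : ∀ k ∈ range (m + 1), (Nat.choose (2 * m) (m + k) : ℤ√2) * (pell k : ℤ√2) ^ 2 * 8
        = (Nat.choose (2 * m) (m + k) : ℤ√2) * ((α ^ 2) ^ k + (β ^ 2) ^ k)
          - (Nat.choose (2 * m) (m + k) : ℤ√2) * ((-1 : ℤ√2) ^ k + (-1) ^ k) := by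
      intro k _
      have hk := key_identity k
      push_cast at hk
      linear_combination (Nat.choose (2 * m) (m + k) : ℤ√2) * hk
    rw [Finset.sum_congr rfl hterm, Finset.sum_sub_distrib, hcancel, hWcancel]
    push_cast
    ring
  have hnat : (∑ k ∈ Finset.range (m + 1),
      Nat.choose (2 * m) (m + k) * pell k ^ 2) * 8 = 8 ^ m := by
    exact_mod_cast main
  have h8m : (8 : ℕ) ^ m = 2 ^ (3 * (m - 1)) * 8 := by
    have h1 : (8 : ℕ) ^ m = 2 ^ (3 * m) := by
      rw [show (8 : ℕ) = 2 ^ 3 from rfl, ← pow_mul]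
    have h2 : 3 * m = 3 * (m - 1) + 3 := by omega
    rw [h1, h2, pow_add]
    norm_num
  rw [h8m] at hnat
  exact Nat.eq_of_mul_eq_mul_right (by norm_num) hnat
end

section
/- Let A, B be n×n complex matrices with ‖A‖_F ≥ ‖B‖_F, and suppose the angle θ between A and B (with respect to the Frobenius inner product ⟨A,B⟩ = tr(B*A)) satisfies θ ≤ 2α ≤ π. Then ‖A − B‖_F ≤ (‖A‖_F − ‖B‖_F) cos α + (‖A‖_F + ‖B‖_F) sin α. -/
open scoped ComplexOrder

noncomputable def frobNorm {n : ℕ} (A : Matrix (Fin n) (Fin n) ℂ) : ℝ :=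
  Real.sqrt (∑ i, ∑ j, ‖A i j‖ ^ 2)

theorem sqrt_sq_add_sq_sub_le_of_cos_two_mul_le {a b p α : ℝ} (hb : 0 ≤ b) (hba : b ≤ a)
    (hα0 : 0 ≤ α) (hα : 2 * α ≤ Real.pi) (hp : a * b * Real.cos (2 * α) ≤ p) :
    Real.sqrt (a ^ 2 + b ^ 2 - 2 * p)
      ≤ (a - b) * Real.cos α + (a + b) * Real.sin α := by
  have hcos : 0 ≤ Real.cos α :=
    Real.cos_nonneg_of_mem_Icc ⟨by linarith [Real.pi_pos], by linarith⟩
  have hsin : 0 ≤ Real.sin α :=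
    Real.sin_nonneg_of_nonneg_of_le_pi hα0 (by linarith [Real.pi_pos])
  have hab : 0 ≤ (a - b) * (a + b) * (Real.sin α * Real.cos α) :=
    mul_nonneg (mul_nonneg (by linarith) (by linarith)) (mul_nonneg hsin hcos)
  rw [Real.sqrt_le_iff]
  constructor
  · have := mul_nonneg (sub_nonneg.2 hba) hcos
    have := mul_nonneg (by linarith : 0 ≤ a + b) hsin
    linarith
  · -- The gap between the two sides is `2 (p - a b cos 2α) + 2 (a² - b²) sin α cos α`.
    rw [Real.cos_two_mul'] at hp
    nlinarith [Real.sin_sq_add_cos_sq α]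

theorem frobNorm_sq {n : ℕ} (A : Matrix (Fin n) (Fin n) ℂ) :
    frobNorm A ^ 2 = ∑ i, ∑ j, ‖A i j‖ ^ 2 :=
  Real.sq_sqrt (by positivity)

theorem re_trace_conjTranspose_mul {n : ℕ} (A B : Matrix (Fin n) (Fin n) ℂ) :
    (Matrix.trace (B.conjTranspose * A)).re
      = ∑ i, ∑ j, (A i j * starRingEnd ℂ (B i j)).re := by
  rw [Finset.sum_comm]
  simp [Matrix.trace, Matrix.mul_apply, Complex.re_sum, mul_comm]

theorem frobNorm_sub_eq_sqrt {n : ℕ} (A B : Matrix (Fin n) (Fin n) ℂ) :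
    frobNorm (A - B) = Real.sqrt (frobNorm A ^ 2 + frobNorm B ^ 2
      - 2 * (Matrix.trace (B.conjTranspose * A)).re) := by
  rw [frobNorm, frobNorm_sq, frobNorm_sq, re_trace_conjTranspose_mul]
  simp only [Matrix.sub_apply, Complex.sq_norm, Complex.normSq_sub, Finset.mul_sum,
    ← Finset.sum_add_distrib, ← Finset.sum_sub_distrib]

/-- Monga–Shah lemma: if `‖A‖_F ≥ ‖B‖_F` and the angle `θ` between `A` and `B`
(w.r.t. the Frobenius inner product, i.e. `cos θ = Re tr(B*A)/(‖A‖_F‖B‖_F)`) satisfies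
`θ ≤ 2α ≤ π`, then `‖A − B‖_F ≤ (‖A‖_F − ‖B‖_F) cos α + (‖A‖_F + ‖B‖_F) sin α`. -/
theorem frob_sub_le_of_angle {n : ℕ} (A B : Matrix (Fin n) (Fin n) ℂ) (α : ℝ)
    (hAB : frobNorm B ≤ frobNorm A)
    (hα0 : 0 ≤ α) (hα : 2 * α ≤ Real.pi)
    (hangle : frobNorm A * frobNorm B * Real.cos (2 * α)
        ≤ (Matrix.trace (B.conjTranspose * A)).re) :
    frobNorm (A - B)
      ≤ (frobNorm A - frobNorm B) * Real.cos α
        + (frobNorm A + frobNorm B) * Real.sin α := by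
  rw [frobNorm_sub_eq_sqrt]
  exact sqrt_sq_add_sq_sub_le_of_cos_two_mul_le (Real.sqrt_nonneg _) hAB hα0 hα hangle
end

section
/- Let P(z) = Σ_{j=0}^m A_j z^j be a matrix polynomial with A_j ∈ M_{n,n}(ℂ) and A_m invertible. Then every eigenvalue λ of P (i.e., every λ with P(λ)u = 0 for some nonzero vector u) satisfies |λ| ≤ ρ, where ρ is the unique positive root of the equation ‖A_m^{-1}‖^{-1} x^m − ‖A_{m-1}‖ x^{m-1} − ... − ‖A_1‖ x − ‖A_0‖ = 0, with ‖·‖ a subordinate (operator) matrix norm. -/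
/-!
If `P(λ)x = 0` with `x ≠ 0`, then `λ^m A_m x = -∑_{j<m} λ^j A_j x`; bounding `‖A_m x‖` below by
`‖A_m⁻¹‖⁻¹ ‖x‖` and the right-hand side above by the triangle inequality shows that `|λ|` satisfies
`‖A_m⁻¹‖⁻¹ |λ|^m ≤ ∑_{j<m} ‖A_j‖ |λ|^j`. A polynomial `c x^m - ∑_{j<m} a_j x^j` with `c > 0`,
`a_j ≥ 0` is positive beyond its positive root `ρ` (compare termwise after scaling `x = tρ`), so
`|λ| ≤ ρ`.
-/

open Finset

/-- Operator norm of a complex matrix, subordinate to the Euclidean vector norm. -/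
noncomputable def opNorm {n : ℕ} (A : Matrix (Fin n) (Fin n) ℂ) : ℝ :=
  ‖Matrix.toEuclideanCLM (𝕜 := ℂ) A‖

theorem sum_mul_pow_lt_mul_pow_of_root_lt {m : ℕ} {a : ℕ → ℝ} {c ρ x : ℝ}
    (ha : ∀ j ∈ range m, 0 ≤ a j) (hc : 0 < c) (hρ : 0 < ρ)
    (hroot : ∑ j ∈ range m, a j * ρ ^ j = c * ρ ^ m) (hρx : ρ < x) :
    ∑ j ∈ range m, a j * x ^ j < c * x ^ m := by
  have hsum_pos : ∑ j ∈ range m, (0 : ℝ) < ∑ j ∈ range m, a j * ρ ^ j := by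
    rw [sum_const_zero, hroot]; positivity
  obtain ⟨j₀, hj₀, hpos₀⟩ := exists_lt_of_sum_lt hsum_pos
  set t := x / ρ
  have ht : 1 < t := (one_lt_div hρ).2 hρx
  have hx : ∀ j, a j * x ^ j = a j * ρ ^ j * t ^ j := fun j => by
    rw [mul_assoc, ← mul_pow, mul_div_cancel₀ _ hρ.ne']
  calc ∑ j ∈ range m, a j * x ^ j
      = ∑ j ∈ range m, a j * ρ ^ j * t ^ j := sum_congr rfl fun j _ => hx j
    _ < ∑ j ∈ range m, a j * ρ ^ j * t ^ m := by
      refine sum_lt_sum (fun j hj => ?_) ⟨j₀, hj₀, ?_⟩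
      · exact mul_le_mul_of_nonneg_left (pow_le_pow_right₀ ht.le (mem_range.1 hj).le)
          (mul_nonneg (ha j hj) (pow_nonneg hρ.le j))
      · exact mul_lt_mul_of_pos_left (pow_lt_pow_right₀ ht (mem_range.1 hj₀)) hpos₀
    _ = c * x ^ m := by rw [← sum_mul, hroot, mul_assoc, ← mul_pow, mul_div_cancel₀ _ hρ.ne']

section Operator

variable {𝕜 E : Type*} [NontriviallyNormedField 𝕜] [NormedAddCommGroup E] [NormedSpace 𝕜 E]

theorem ContinuousLinearMap.inv_norm_mul_norm_le_norm_apply_of_mul_eq_one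
    {S T : E →L[𝕜] E} (hST : S * T = 1) (x : E) : ‖S‖⁻¹ * ‖x‖ ≤ ‖T x‖ := by
  rcases (norm_nonneg S).eq_or_lt with hS | hS
  · rw [← hS, inv_zero, zero_mul]; exact norm_nonneg _
  · rw [inv_mul_le_iff₀ hS]
    calc ‖x‖ = ‖S (T x)‖ := by rw [← mul_apply_eq_comp, hST, one_apply_eq_self]
      _ ≤ ‖S‖ * ‖T x‖ := S.le_opNorm _

theorem ContinuousLinearMap.inv_norm_mul_norm_pow_le_of_polynomial_apply_eq_zero {m : ℕ}
    {T : ℕ → E →L[𝕜] E} {S : E →L[𝕜] E} (hS : S * T m = 1) {lam : 𝕜} {x : E} (hx : x ≠ 0)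
    (hlam : (∑ j ∈ range (m + 1), lam ^ j • T j) x = 0) :
    ‖S‖⁻¹ * ‖lam‖ ^ m ≤ ∑ j ∈ range m, ‖T j‖ * ‖lam‖ ^ j := by
  have hlead : T m (lam ^ m • x) = -∑ j ∈ range m, lam ^ j • T j x := by
    rw [sum_range_succ, add_apply] at hlam
    simpa [eq_neg_iff_add_eq_zero, add_comm] using hlam
  refine le_of_mul_le_mul_right ?_ (norm_pos_iff.2 hx)
  calc ‖S‖⁻¹ * ‖lam‖ ^ m * ‖x‖ = ‖S‖⁻¹ * ‖lam ^ m • x‖ := by rw [norm_smul, norm_pow, mul_assoc]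
    _ ≤ ‖T m (lam ^ m • x)‖ := inv_norm_mul_norm_le_norm_apply_of_mul_eq_one hS _
    _ ≤ ∑ j ∈ range m, ‖lam ^ j • T j x‖ := by rw [hlead, norm_neg]; exact norm_sum_le _ _
    _ ≤ ∑ j ∈ range m, ‖T j‖ * ‖lam‖ ^ j * ‖x‖ := by
      refine sum_le_sum fun j _ => ?_
      rw [norm_smul, norm_pow, mul_comm (‖T j‖), mul_assoc]
      gcongr
      exact (T j).le_opNorm x
    _ = (∑ j ∈ range m, ‖T j‖ * ‖lam‖ ^ j) * ‖x‖ := by rw [sum_mul]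

end Operator

theorem matrixPoly_eigenvalue_bound_cauchy_general {n : ℕ} (m : ℕ)
    (A : ℕ → Matrix (Fin n) (Fin n) ℂ) (hA : IsUnit (A m).det)
    (ρ : ℝ) (hρpos : 0 < ρ)
    (hρroot : (opNorm (A m)⁻¹)⁻¹ * ρ ^ m
        - ∑ j ∈ Finset.range m, opNorm (A j) * ρ ^ j = 0)
    (lam : ℂ)
    (hlam : (∑ j ∈ Finset.range (m + 1), lam ^ j • A j).det = 0) :
    ‖lam‖ ≤ ρ := by
  obtain ⟨v, hv, hPv⟩ := Matrix.exists_mulVec_eq_zero_iff.2 hlam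
  let T : ℕ → EuclideanSpace ℂ (Fin n) →L[ℂ] EuclideanSpace ℂ (Fin n) :=
    fun j => Matrix.toEuclideanCLM (𝕜 := ℂ) (A j)
  set S := Matrix.toEuclideanCLM (𝕜 := ℂ) (A m)⁻¹
  have hS : S * T m = 1 := by rw [← map_mul, Matrix.nonsing_inv_mul _ hA, map_one]
  have hx : WithLp.toLp 2 v ≠ 0 := by simpa using hv
  have hker : (∑ j ∈ range (m + 1), lam ^ j • T j) (WithLp.toLp 2 v) = 0 := by
    simpa [T, ← map_smul, ← map_sum, Matrix.toEuclideanCLM_toLp] using congrArg (WithLp.toLp 2) hPv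
  have : Nontrivial (EuclideanSpace ℂ (Fin n)) := nontrivial_of_ne _ _ hx
  have hc : 0 < ‖S‖⁻¹ := inv_pos.2 (norm_pos_iff.2 (left_ne_zero_of_mul_eq_one hS))
  refine le_of_not_gt fun hρlam => ?_
  refine (sum_mul_pow_lt_mul_pow_of_root_lt (fun j _ => norm_nonneg (T j)) hc hρpos
    (sub_eq_zero.1 hρroot).symm hρlam).not_ge ?_
  exact ContinuousLinearMap.inv_norm_mul_norm_pow_le_of_polynomial_apply_eq_zero hS hx hker

/-- Cauchy-type bound for matrix polynomials: all eigenvalues of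
`P(z) = ∑_{j=0}^m A_j z^j` (with `A_m` invertible) lie in `|z| ≤ ρ`, where `ρ` is the
unique positive root of `‖A_m⁻¹‖⁻¹ x^m − ∑_{j=0}^{m-1} ‖A_j‖ x^j = 0`. -/
theorem matrixPoly_eigenvalue_bound_cauchy {n : ℕ} (m : ℕ) (hm : 0 < m)
    (A : ℕ → Matrix (Fin n) (Fin n) ℂ) (hA : IsUnit (A m).det)
    (ρ : ℝ) (hρpos : 0 < ρ)
    (hρroot : (opNorm (A m)⁻¹)⁻¹ * ρ ^ m
        - ∑ j ∈ Finset.range m, opNorm (A j) * ρ ^ j = 0)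
    (lam : ℂ)
    (hlam : (∑ j ∈ Finset.range (m + 1), lam ^ j • A j).det = 0) :
    ‖lam‖ ≤ ρ :=
  matrixPoly_eigenvalue_bound_cauchy_general m A hA ρ hρpos hρroot lam hlam
end

section
/- Let P(z) = Σ_{j=0}^m A_j z^j be a matrix polynomial of degree m with A_m invertible, and let t > 0 satisfy ‖A_m^{-1}‖^{-1} ≥ t‖A_{m-1}‖ ≥ t²‖A_{m-2}‖ ≥ ... ≥ t^m‖A_0‖ with A_0 positive definite. Then every eigenvalue λ of P satisfies |λ| ≤ k₁/t, where k₁ is the greatest positive root of K^{m+1} − 2K^m + 1 = 0. -/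
open scoped ComplexOrder

/-!
Write `K = t|λ|`. From `P(λ)u = 0`, `λ^m A_m u = -∑_{j<m} λ^j A_j u`; bounding the left side
below by `‖A_m⁻¹‖⁻¹ |λ|^m ‖u‖` and each `‖A_j‖` above by `‖A_m⁻¹‖⁻¹ t^{j-m}` gives
`K^m ≤ ∑_{j<m} K^j`. Since `K^{m+1} - 2K^m + 1 = (K - 1)(K^m - ∑_{j<m} K^j)`, either `K ≤ 1`,
and `1` is itself a root, or the trinomial is nonpositive at `K` and so has a root `≥ K`.
-/

open Finset

lemma trinomial_eq_sub_one_mul {R : Type*} [CommRing R] (x : R) (m : ℕ) :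
    x ^ (m + 1) - 2 * x ^ m + 1 = (x - 1) * (x ^ m - ∑ j ∈ range m, x ^ j) := by
  linear_combination geom_sum_mul x m

lemma exists_trinomial_root_ge {m : ℕ} {x : ℝ} (hx : x ^ (m + 1) - 2 * x ^ m + 1 ≤ 0) :
    ∃ c, x ≤ c ∧ c ^ (m + 1) - 2 * c ^ m + 1 = 0 := by
  set b := max x 2
  have hb : 0 ≤ b ^ (m + 1) - 2 * b ^ m + 1 := by
    have hb2 : 2 ≤ b := le_max_right _ _
    have : b ^ (m + 1) - 2 * b ^ m + 1 = b ^ m * (b - 2) + 1 := by ring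
    have : 0 ≤ b ^ m * (b - 2) := mul_nonneg (by positivity) (by linarith)
    linarith
  obtain ⟨c, hc, hroot⟩ := intermediate_value_Icc (le_max_left x 2)
    (f := fun y : ℝ => y ^ (m + 1) - 2 * y ^ m + 1) (by fun_prop) ⟨hx, hb⟩
  exact ⟨c, hc.1, hroot⟩

lemma le_of_pow_le_geom_sum {m : ℕ} {K k₁ : ℝ} (hK : K ^ m ≤ ∑ j ∈ range m, K ^ j)
    (hk₁max : ∀ x : ℝ, 0 < x → x ^ (m + 1) - 2 * x ^ m + 1 = 0 → x ≤ k₁) :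
    K ≤ k₁ := by
  rcases le_or_gt K 1 with hK1 | hK1
  · exact hK1.trans (hk₁max 1 one_pos (by ring))
  · have hneg : K ^ (m + 1) - 2 * K ^ m + 1 ≤ 0 := by
      rw [trinomial_eq_sub_one_mul]
      exact mul_nonpos_of_nonneg_of_nonpos (by linarith) (by linarith)
    obtain ⟨c, hKc, hroot⟩ := exists_trinomial_root_ge hneg
    exact hKc.trans (hk₁max c (by linarith) hroot)

lemma le_apply_pred_of_le_succ {β : Type*} [Preorder β] {f : ℕ → β} {m : ℕ}
    (hf : ∀ j, j + 1 < m → f j ≤ f (j + 1)) {j : ℕ} (hj : j < m) : f j ≤ f (m - 1) :=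
  monotoneOn_of_le_add_one Set.ordConnected_Iio (fun a _ _ ha => hf a ha)
    hj (by simp only [Set.mem_Iio]; omega) (by omega)

section Operators

variable {𝕜 E : Type*}

lemma norm_pow_mul_norm_le_sum_of_sum_smul_eq_zero [NormedField 𝕜] [SeminormedAddCommGroup E]
    [NormedSpace 𝕜 E] {m : ℕ} {x : ℕ → E} {lam : 𝕜} (h : ∑ j ∈ range (m + 1), lam ^ j • x j = 0) :
    ‖lam‖ ^ m * ‖x m‖ ≤ ∑ j ∈ range m, ‖lam‖ ^ j * ‖x j‖ := by
  rw [sum_range_succ, add_comm, add_eq_zero_iff_eq_neg] at h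
  calc ‖lam‖ ^ m * ‖x m‖ = ‖lam ^ m • x m‖ := by rw [norm_smul, norm_pow]
    _ = ‖∑ j ∈ range m, lam ^ j • x j‖ := by rw [h, norm_neg]
    _ ≤ ∑ j ∈ range m, ‖lam‖ ^ j * ‖x j‖ := by
        refine (norm_sum_le _ _).trans_eq (sum_congr rfl fun j _ => ?_)
        rw [norm_smul, norm_pow]

lemma inv_norm_mul_norm_le_norm_apply [NontriviallyNormedField 𝕜] [SeminormedAddCommGroup E]
    [NormedSpace 𝕜 E]
    {S T : E →L[𝕜] E} (hST : ∀ x, S (T x) = x) (x : E) : ‖S‖⁻¹ * ‖x‖ ≤ ‖T x‖ := by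
  rcases (norm_nonneg S).eq_or_lt with hS | hS
  · rw [← hS, inv_zero, zero_mul]
    exact norm_nonneg _
  · rw [inv_mul_le_iff₀ hS]
    simpa only [hST] using S.le_opNorm (T x)

lemma pow_le_geom_sum_of_sum_smul_apply_eq_zero [NontriviallyNormedField 𝕜]
    [NormedAddCommGroup E] [NormedSpace 𝕜 E]
    {m : ℕ} {T : ℕ → E →L[𝕜] E} {S : E →L[𝕜] E} (hS : ∀ x, S (T m x) = x)
    {t : ℝ} (ht : 0 < t) (hT : ∀ j < m, t ^ (m - j) * ‖T j‖ ≤ ‖S‖⁻¹)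
    {lam : 𝕜} {v : E} (hv : v ≠ 0) (h : ∑ j ∈ range (m + 1), lam ^ j • T j v = 0) :
    (t * ‖lam‖) ^ m ≤ ∑ j ∈ range m, (t * ‖lam‖) ^ j := by
  set r := ‖lam‖
  set M := ‖S‖⁻¹
  have hSne : S ≠ 0 := fun h0 => hv (by simpa [h0] using (hS v).symm)
  have hMv : 0 < M * ‖v‖ := mul_pos (inv_pos.mpr (norm_pos_iff.mpr hSne)) (norm_pos_iff.mpr hv)
  have hlow : M * ‖v‖ ≤ ‖T m v‖ := inv_norm_mul_norm_le_norm_apply hS v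
  have hup : ∀ j ∈ range m, t ^ m * ‖T j v‖ ≤ t ^ j * (M * ‖v‖) := fun j hj => by
    have hj := mem_range.mp hj
    have hsplit : t ^ m = t ^ j * t ^ (m - j) := by rw [← pow_add]; congr 1; omega
    calc t ^ m * ‖T j v‖ ≤ t ^ m * (‖T j‖ * ‖v‖) := by gcongr; exact (T j).le_opNorm v
      _ = t ^ j * ((t ^ (m - j) * ‖T j‖) * ‖v‖) := by rw [hsplit]; ring
      _ ≤ t ^ j * (M * ‖v‖) := by gcongr; exact hT j hj
  refine le_of_mul_le_mul_right ?_ hMv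
  calc (t * r) ^ m * (M * ‖v‖) ≤ t ^ m * (r ^ m * ‖T m v‖) := by
        rw [mul_pow, mul_assoc]; gcongr
    _ ≤ t ^ m * ∑ j ∈ range m, r ^ j * ‖T j v‖ := by
        gcongr; exact norm_pow_mul_norm_le_sum_of_sum_smul_eq_zero h
    _ = ∑ j ∈ range m, r ^ j * (t ^ m * ‖T j v‖) := by
        rw [mul_sum]; exact sum_congr rfl fun j _ => by ring
    _ ≤ ∑ j ∈ range m, r ^ j * (t ^ j * (M * ‖v‖)) := by
        exact sum_le_sum fun j hj => mul_le_mul_of_nonneg_left (hup j hj) (by positivity)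
    _ = (∑ j ∈ range m, (t * r) ^ j) * (M * ‖v‖) := by
        rw [sum_mul]; exact sum_congr rfl fun j _ => by ring

end Operators

theorem matrixPoly_eigenvalue_bound_trinomial_general {n : ℕ} (m : ℕ)
    (A : ℕ → Matrix (Fin n) (Fin n) ℂ) (hA : IsUnit (A m).det)
    (t : ℝ) (ht : 0 < t)
    (htop : t * opNorm (A (m - 1)) ≤ (opNorm (A m)⁻¹)⁻¹)
    (hchain : ∀ j, j + 1 < m →
        t ^ (m - j) * opNorm (A j) ≤ t ^ (m - (j + 1)) * opNorm (A (j + 1)))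
    (k₁ : ℝ)
    (hk₁max : ∀ x : ℝ, 0 < x → x ^ (m + 1) - 2 * x ^ m + 1 = 0 → x ≤ k₁)
    (lam : ℂ) (u : Fin n → ℂ) (hu : u ≠ 0)
    (hlam : (∑ j ∈ Finset.range (m + 1), lam ^ j • A j).mulVec u = 0) :
    ‖lam‖ ≤ k₁ / t := by
  let T : ℕ → _ := fun j => Matrix.toEuclideanCLM (𝕜 := ℂ) (A j)
  have hinv : ∀ x, Matrix.toEuclideanCLM (𝕜 := ℂ) (A m)⁻¹ (T m x) = x := fun x => by
    change (Matrix.toEuclideanCLM (𝕜 := ℂ) (A m)⁻¹ * T m) x = x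
    rw [← map_mul, Matrix.nonsing_inv_mul _ hA, map_one]
    rfl
  have hT : ∀ j < m, t ^ (m - j) * ‖T j‖ ≤ (opNorm (A m)⁻¹)⁻¹ := fun j hj =>
    (le_apply_pred_of_le_succ (f := fun j => t ^ (m - j) * opNorm (A j)) hchain hj).trans
      (by simpa only [show m - (m - 1) = 1 by omega, pow_one] using htop)
  have hv : WithLp.toLp 2 u ≠ 0 := by simpa using hu
  have heig : ∑ j ∈ range (m + 1), lam ^ j • T j (WithLp.toLp 2 u) = 0 := by
    have := congrArg (WithLp.toLp 2) hlam
    rw [← Matrix.toEuclideanCLM_toLp, map_sum] at this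
    simpa [T] using this
  rw [le_div_iff₀ ht, mul_comm]
  exact le_of_pow_le_geom_sum
    (pow_le_geom_sum_of_sum_smul_apply_eq_zero hinv ht hT hv heig) hk₁max

/-- Theorem 1: if `t > 0` and
`‖A_m⁻¹‖⁻¹ ≥ t‖A_{m-1}‖ ≥ t²‖A_{m-2}‖ ≥ ⋯ ≥ t^m‖A_0‖` with `A_0` positive definite,
then every eigenvalue of `P(z) = ∑_{j=0}^m A_j z^j` satisfies `|λ| ≤ k₁/t`, where `k₁`
is the greatest positive root of `K^{m+1} − 2K^m + 1 = 0`. -/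
theorem matrixPoly_eigenvalue_bound_trinomial {n : ℕ} (m : ℕ) (hm : 0 < m)
    (A : ℕ → Matrix (Fin n) (Fin n) ℂ) (hA : IsUnit (A m).det)
    (t : ℝ) (ht : 0 < t)
    (htop : t * opNorm (A (m - 1)) ≤ (opNorm (A m)⁻¹)⁻¹)
    (hchain : ∀ j, j + 1 < m →
        t ^ (m - j) * opNorm (A j) ≤ t ^ (m - (j + 1)) * opNorm (A (j + 1)))
    (h0 : (A 0).PosDef)
    (k₁ : ℝ) (hk₁pos : 0 < k₁)
    (hk₁root : k₁ ^ (m + 1) - 2 * k₁ ^ m + 1 = 0)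
    (hk₁max : ∀ x : ℝ, 0 < x → x ^ (m + 1) - 2 * x ^ m + 1 = 0 → x ≤ k₁)
    (lam : ℂ) (u : Fin n → ℂ) (hu : u ≠ 0)
    (hlam : (∑ j ∈ Finset.range (m + 1), lam ^ j • A j).mulVec u = 0) :
    ‖lam‖ ≤ k₁ / t :=
  matrixPoly_eigenvalue_bound_trinomial_general m A hA t ht htop hchain k₁ hk₁max lam u hu hlam
end

section
/- Let P(z) = Σ_{j=0}^m A_j z^j be a matrix polynomial of degree m with A_m invertible. Suppose for some k ≥ 1, k‖A_m‖_F ≥ ‖A_{m-1}‖_F ≥ ... ≥ ‖A_1‖_F ≥ ‖A_0‖_F, and suppose there is a nonzero matrix C such that the angle between A_j and C (Frobenius inner product) is at most α ≤ π/2 for all j = 0,...,m. Then every eigenvalue z of P satisfies |z + k − 1| ≤ ‖A_m^{-1}‖_F · [ (k‖A_m‖_F − ‖A_0‖_F)(sin α + cos α) + ‖A_0‖_F + 2 sin α Σ_{j=0}^{m-1} ‖A_j‖_F ]. -/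
open Finset Real InnerProductGeometry
open scoped RealInnerProductSpace

noncomputable def polygonalLength {V : Type*} [SeminormedAddCommGroup V] (b : ℕ → V) (M : ℕ)
    (top : V) : ℝ :=
  ‖top - b M‖ + ∑ j ∈ range M, ‖b (j + 1) - b j‖ + ‖b 0‖

theorem polygonalLength_nonneg {V : Type*} [SeminormedAddCommGroup V] (b : ℕ → V) (M : ℕ)
    (top : V) : 0 ≤ polygonalLength b M top := by
  unfold polygonalLength; positivity

section Telescoping

variable {R V : Type*} [CommRing R] [AddCommGroup V] [Module R V]

theorem sub_one_smul_sum_range_pow_smul (z : R) (a : ℕ → V) (M : ℕ) :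
    (z - 1) • ∑ j ∈ range (M + 1), z ^ j • a j
      = z ^ (M + 1) • a M - ∑ j ∈ range M, z ^ (j + 1) • (a (j + 1) - a j) - a 0 := by
  induction M with
  | zero => simp [sub_smul]
  | succ M ih =>
    rw [sum_range_succ, smul_add, ih, sum_range_succ]
    module

theorem add_sub_one_mul_pow_smul_eq (z k : R) (a : ℕ → V) (M : ℕ) :
    ((z + k - 1) * z ^ (M + 1)) • a (M + 1)
      = z ^ (M + 1) • (k • a (M + 1) - a M) + ∑ j ∈ range M, z ^ (j + 1) • (a (j + 1) - a j)
        + a 0 + (z - 1) • ∑ j ∈ range (M + 1 + 1), z ^ j • a j := by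
  rw [sub_one_smul_sum_range_pow_smul, sum_range_succ]
  module

end Telescoping

theorem norm_pow_smul_add_sum_le {𝕜 V : Type*} [NormedField 𝕜] [SeminormedAddCommGroup V]
    [NormedSpace 𝕜 V] {z : 𝕜} (hz : 1 ≤ ‖z‖) (a : ℕ → V) (M : ℕ) (top : V) :
    ‖z ^ (M + 1) • (top - a M) + ∑ j ∈ range M, z ^ (j + 1) • (a (j + 1) - a j) + a 0‖
      ≤ ‖z‖ ^ (M + 1) * polygonalLength a M top := by
  have hpow : ∀ i ≤ M + 1, ‖z ^ i‖ ≤ ‖z‖ ^ (M + 1) := fun i hi =>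
    (norm_pow z i).trans_le (pow_le_pow_right₀ hz hi)
  have hsum : ‖∑ j ∈ range M, z ^ (j + 1) • (a (j + 1) - a j)‖
      ≤ ‖z‖ ^ (M + 1) * ∑ j ∈ range M, ‖a (j + 1) - a j‖ := by
    rw [mul_sum]
    refine (norm_sum_le _ _).trans (sum_le_sum fun j hj => ?_)
    rw [norm_smul]
    gcongr
    exact hpow _ (by simp at hj; omega)
  calc _ ≤ ‖z ^ (M + 1) • (top - a M)‖ + ‖∑ j ∈ range M, z ^ (j + 1) • (a (j + 1) - a j)‖
        + ‖a 0‖ := norm_add₃_le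
    _ ≤ ‖z‖ ^ (M + 1) * ‖top - a M‖ + ‖z‖ ^ (M + 1) * ∑ j ∈ range M, ‖a (j + 1) - a j‖
        + ‖z‖ ^ (M + 1) * ‖a 0‖ := by
      rw [norm_smul, norm_pow]
      gcongr
      exact le_mul_of_one_le_left (norm_nonneg _) (one_le_pow₀ hz)
    _ = ‖z‖ ^ (M + 1) * polygonalLength a M top := by
      rw [polygonalLength]; ring

theorem norm_add_sub_one_mul_norm_mul_le {𝕜 R : Type*} [NormedField 𝕜] [NormedRing R]
    [NormedAlgebra 𝕜 R] {a : ℕ → R} {M : ℕ} {x : R} {z : 𝕜} (hz : 1 ≤ ‖z‖)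
    (k : 𝕜) (hx : ((z - 1) • ∑ j ∈ range (M + 1 + 1), z ^ j • a j) * x = 0) :
    ‖z + k - 1‖ * ‖a (M + 1) * x‖ ≤ polygonalLength a M (k • a (M + 1)) * ‖x‖ := by
  set E := z ^ (M + 1) • (k • a (M + 1) - a M) + ∑ j ∈ range M, z ^ (j + 1) • (a (j + 1) - a j)
    + a 0
  have hid : ((z + k - 1) * z ^ (M + 1)) • (a (M + 1) * x) = E * x := by
    rw [← smul_mul_assoc, add_sub_one_mul_pow_smul_eq, add_mul, hx, add_zero]
  have hzM : 0 < ‖z‖ ^ (M + 1) := by positivity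
  refine le_of_mul_le_mul_left ?_ hzM
  calc ‖z‖ ^ (M + 1) * (‖z + k - 1‖ * ‖a (M + 1) * x‖)
      = ‖((z + k - 1) * z ^ (M + 1)) • (a (M + 1) * x)‖ := by
        rw [norm_smul, norm_mul (z + k - 1), norm_pow]; ring
    _ ≤ ‖E‖ * ‖x‖ := hid ▸ norm_mul_le E x
    _ ≤ ‖z‖ ^ (M + 1) * polygonalLength a M (k • a (M + 1)) * ‖x‖ := by
        gcongr
        exact norm_pow_smul_add_sum_le hz a M _
    _ = _ := mul_assoc _ _ _

theorem norm_add_sub_one_le_mul_polygonalLength {R : Type*} [NormedRing R] [NormedAlgebra ℂ R]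
    {a : ℕ → R} {M : ℕ} {u x : R} (hu : u * a (M + 1) = 1) (hx : x ≠ 0) {z : ℂ}
    (hz : (∑ j ∈ range (M + 1 + 1), z ^ j • a j) * x = 0) {k : ℝ} (hk : 1 ≤ k) :
    ‖z + k - 1‖ ≤ ‖u‖ * polygonalLength a M ((k : ℂ) • a (M + 1)) := by
  set L := polygonalLength a M ((k : ℂ) • a (M + 1))
  have hbound : ‖z + k - 1‖ * ‖a (M + 1) * x‖ ≤ L * ‖x‖ := by
    rcases le_or_gt ‖z‖ 1 with hz1 | hz1
    · -- for `‖z‖ ≤ 1` the estimate at `z = 1`, where `(z - 1) • P z` vanishes, is enough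
      have hk' : ‖z + k - 1‖ ≤ ‖(1 : ℂ) + k - 1‖ := by
        rw [add_sub_cancel_left, Complex.norm_real, norm_of_nonneg (by linarith), add_sub_assoc]
        refine (norm_add_le _ _).trans ?_
        rw [← Complex.ofReal_one, ← Complex.ofReal_sub, Complex.norm_real,
          norm_of_nonneg (by linarith)]
        linarith
      refine (mul_le_mul_of_nonneg_right hk' (norm_nonneg _)).trans ?_
      exact norm_add_sub_one_mul_norm_mul_le (by simp) _ (by simp)
    · exact norm_add_sub_one_mul_norm_mul_le hz1.le _ (by rw [smul_mul_assoc, hz, smul_zero])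
  have hxu : ‖x‖ ≤ ‖u‖ * ‖a (M + 1) * x‖ := by
    calc ‖x‖ = ‖u * (a (M + 1) * x)‖ := by rw [← mul_assoc, hu, one_mul]
      _ ≤ _ := norm_mul_le _ _
  have hax : 0 < ‖a (M + 1) * x‖ := by
    by_contra! h
    exact hx (norm_le_zero_iff.1 (hxu.trans (by nlinarith [norm_nonneg u])))
  refine le_of_mul_le_mul_right ?_ hax
  calc ‖z + k - 1‖ * ‖a (M + 1) * x‖ ≤ L * ‖x‖ := hbound
    _ ≤ L * (‖u‖ * ‖a (M + 1) * x‖) := mul_le_mul_of_nonneg_left hxu (polygonalLength_nonneg _ _ _)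
    _ = ‖u‖ * L * ‖a (M + 1) * x‖ := by ring

section Cone

variable {V : Type*} [NormedAddCommGroup V] [InnerProductSpace ℝ V]

theorem angle_le_of_norm_mul_norm_mul_cos_le_inner {x y : V} {α : ℝ} (hx : x ≠ 0) (hy : y ≠ 0)
    (hα : 0 ≤ α) (h : ‖x‖ * ‖y‖ * cos α ≤ ⟪x, y⟫) : angle x y ≤ α := by
  by_contra! hlt
  have hcos : cos (angle x y) < cos α :=
    cos_lt_cos_of_nonneg_of_le_pi hα (angle_le_pi x y) hlt
  have hpos : 0 < ‖x‖ * ‖y‖ := by positivity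
  rw [← cos_angle_mul_norm_mul_norm] at h
  nlinarith

theorem norm_mul_norm_mul_cos_two_mul_le_inner {x y c : V} {α : ℝ} (hc : c ≠ 0) (hα0 : 0 ≤ α)
    (hα : α ≤ π / 2) (hx : ‖x‖ * ‖c‖ * cos α ≤ ⟪c, x⟫) (hy : ‖y‖ * ‖c‖ * cos α ≤ ⟪c, y⟫) :
    ‖x‖ * ‖y‖ * cos (2 * α) ≤ ⟪x, y⟫ := by
  rcases eq_or_ne x 0 with rfl | hx0
  · simp
  rcases eq_or_ne y 0 with rfl | hy0
  · simp
  have hxc : angle x c ≤ α := by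
    rw [angle_comm]
    exact angle_le_of_norm_mul_norm_mul_cos_le_inner hc hx0 hα0 (by linarith)
  have hcy : angle c y ≤ α :=
    angle_le_of_norm_mul_norm_mul_cos_le_inner hc hy0 hα0 (by linarith)
  have hxy : cos (2 * α) ≤ cos (angle x y) :=
    cos_le_cos_of_nonneg_of_le_pi (angle_nonneg x y) (by linarith)
      (by linarith [angle_le_angle_add_angle x c y])
  rw [← cos_angle_mul_norm_mul_norm]
  nlinarith [mul_nonneg (norm_nonneg x) (norm_nonneg y)]

theorem norm_sub_le_of_cone {x y c : V} {α : ℝ} (hc : c ≠ 0) (hα0 : 0 ≤ α) (hα : α ≤ π / 2)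
    (hxy : ‖x‖ ≤ ‖y‖) (hx : ‖x‖ * ‖c‖ * cos α ≤ ⟪c, x⟫) (hy : ‖y‖ * ‖c‖ * cos α ≤ ⟪c, y⟫) :
    ‖y - x‖ ≤ (‖y‖ - ‖x‖) * cos α + (‖y‖ + ‖x‖) * sin α := by
  have hinner := norm_mul_norm_mul_cos_two_mul_le_inner hc hα0 hα hx hy
  have hcos : 0 ≤ cos α := cos_nonneg_of_mem_Icc ⟨by linarith [pi_pos], hα⟩
  have hsin : 0 ≤ sin α := sin_nonneg_of_nonneg_of_le_pi hα0 (by linarith [pi_pos])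
  refine le_of_pow_le_pow_left₀ two_ne_zero (by nlinarith [norm_nonneg x]) ?_
  rw [norm_sub_sq_real, real_inner_comm x y]
  rw [cos_two_mul] at hinner
  have hsq : ((‖y‖ - ‖x‖) * cos α + (‖y‖ + ‖x‖) * sin α) ^ 2
      = ‖y‖ ^ 2 + ‖x‖ ^ 2 - 2 * (‖x‖ * ‖y‖ * (2 * cos α ^ 2 - 1))
        + 2 * (‖y‖ ^ 2 - ‖x‖ ^ 2) * (sin α * cos α) := by
    linear_combination (‖y‖ + ‖x‖) ^ 2 * sin_sq_add_cos_sq α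
  have hgap : 0 ≤ (‖y‖ ^ 2 - ‖x‖ ^ 2) * (sin α * cos α) :=
    mul_nonneg (by nlinarith [norm_nonneg x]) (mul_nonneg hsin hcos)
  linarith

theorem sum_range_le_of_le_telescoping {d t : ℕ → ℝ} {a b : ℝ} (M : ℕ)
    (h : ∀ j < M, d j ≤ (t (j + 1) - t j) * a + (t (j + 1) + t j) * b) :
    ∑ j ∈ range M, d j ≤ (t M - t 0) * a + (2 * ∑ j ∈ range (M + 1), t j - t 0 - t M) * b := by
  induction M with
  | zero => simp [two_mul]
  | succ M ih =>
    rw [sum_range_succ, sum_range_succ _ (M + 1)]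
    have hlast := h M M.lt_succ_self
    have hinit := ih fun j hj => h j (hj.trans M.lt_succ_self)
    linarith

theorem polygonalLength_le_of_cone {b : ℕ → V} {c : V} {M : ℕ} {k α : ℝ} (hk : 0 ≤ k)
    (hc : c ≠ 0) (hα0 : 0 ≤ α) (hα : α ≤ π / 2) (htop : ‖b M‖ ≤ k * ‖b (M + 1)‖)
    (hchain : ∀ j < M, ‖b j‖ ≤ ‖b (j + 1)‖)
    (hcone : ∀ j ≤ M + 1, ‖b j‖ * ‖c‖ * cos α ≤ ⟪c, b j⟫) :
    polygonalLength b M (k • b (M + 1))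
      ≤ (k * ‖b (M + 1)‖ - ‖b 0‖) * (sin α + cos α) + ‖b 0‖
        + 2 * sin α * ∑ j ∈ range (M + 1), ‖b j‖ := by
  have hkb : ‖k • b (M + 1)‖ = k * ‖b (M + 1)‖ := by rw [norm_smul, norm_of_nonneg hk]
  have hlast := norm_sub_le_of_cone hc hα0 hα (hkb ▸ htop) (hcone M (by omega)) (by
    rw [hkb, inner_smul_right, mul_assoc, mul_assoc]
    exact mul_le_mul_of_nonneg_left (by simpa only [mul_assoc] using hcone _ le_rfl) hk)
  have hsteps := sum_range_le_of_le_telescoping (d := fun j => ‖b (j + 1) - b j‖)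
    (t := fun j => ‖b j‖) (a := cos α) (b := sin α) M fun j hj =>
      norm_sub_le_of_cone hc hα0 hα (hchain j hj) (hcone j (by omega)) (hcone (j + 1) (by omega))
  rw [hkb] at hlast
  rw [polygonalLength]
  linarith

end Cone

theorem Matrix.exists_ne_zero_mul_eq_zero_of_det_eq_zero {K ι : Type*} [Field K] [Fintype ι]
    [DecidableEq ι] {P : Matrix ι ι K} (h : P.det = 0) : ∃ X ≠ 0, P * X = 0 := by
  by_contra! hP
  have : IsLeftRegular P := isLeftRegular_iff_right_eq_zero_of_mul.2 fun X hX => by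
    by_contra hX0; exact hP X hX0 hX
  exact nonsingular_iff_det_ne_zero.1 (isLeftRegular_iff_nonsingular.1 this) h

section Frobenius

open Matrix WithLp

attribute [local instance] frobeniusNormedAddCommGroup frobeniusNormedRing frobeniusNormedAlgebra

variable {ι κ : Type*}

/-- `Matrix.frobeniusNormedAddCommGroup` is by definition the norm of this space. -/
def toFrobeniusSpace : Matrix ι κ ℂ ≃ₗ[ℝ] PiLp 2 (fun _ : ι => EuclideanSpace ℂ κ) where
  toFun A := toLp 2 fun i => toLp 2 (A i)
  invFun v i j := v i j
  map_add' _ _ := rfl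
  map_smul' _ _ := rfl
  left_inv _ := rfl
  right_inv _ := rfl

@[simp]
theorem toFrobeniusSpace_apply (A : Matrix ι κ ℂ) (i : ι) (j : κ) :
    toFrobeniusSpace A i j = A i j :=
  rfl

theorem inner_toFrobeniusSpace [Fintype ι] [Fintype κ] (B A : Matrix ι κ ℂ) :
    ⟪toFrobeniusSpace B, toFrobeniusSpace A⟫ = (Bᴴ * A).trace.re := by
  simp only [PiLp.inner_apply, toFrobeniusSpace_apply, Complex.inner, trace, diag_apply,
    mul_apply, conjTranspose_apply, RCLike.star_def, Complex.re_sum]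
  rw [sum_comm]
  simp [mul_comm]

theorem frobNorm_eq_norm_toFrobeniusSpace {n : ℕ} (A : Matrix (Fin n) (Fin n) ℂ) :
    frobNorm A = ‖toFrobeniusSpace A‖ := by
  rw [frobNorm, show ‖toFrobeniusSpace A‖ = ‖A‖ from rfl, frobenius_norm_def, sqrt_eq_rpow]
  norm_cast

theorem Matrix.norm_add_sub_one_le_frobNorm_inv_mul {n M : ℕ} {A : ℕ → Matrix (Fin n) (Fin n) ℂ}
    (hA : IsUnit (A (M + 1)).det) {z : ℂ} (hz : (∑ j ∈ range (M + 1 + 1), z ^ j • A j).det = 0)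
    {k : ℝ} (hk : 1 ≤ k) :
    ‖z + k - 1‖ ≤ frobNorm (A (M + 1))⁻¹
      * polygonalLength (fun j => toFrobeniusSpace (A j)) M (k • toFrobeniusSpace (A (M + 1))) := by
  obtain ⟨X, hX, hPX⟩ := exists_ne_zero_mul_eq_zero_of_det_eq_zero hz
  have h := norm_add_sub_one_le_mul_polygonalLength (nonsing_inv_mul _ hA) hX hPX hk
  rw [Complex.coe_smul] at h
  rw [frobNorm_eq_norm_toFrobeniusSpace]
  exact h

end Frobenius

/-- Theorem 2: if `k ≥ 1`, `k‖A_m‖_F ≥ ‖A_{m-1}‖_F ≥ ⋯ ≥ ‖A_0‖_F`, and all `A_j`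
make an angle at most `α ≤ π/2` with some nonzero matrix `C` (w.r.t. the Frobenius
inner product), then every eigenvalue `z` of `P(z) = ∑_{j=0}^m A_j z^j` satisfies
`|z + k − 1| ≤ ‖A_m⁻¹‖_F [(k‖A_m‖_F − ‖A_0‖_F)(sin α + cos α) + ‖A_0‖_F
  + 2 sin α ∑_{j=0}^{m-1} ‖A_j‖_F]`. -/
theorem matrixPoly_eigenvalue_bound_shah_liman {n : ℕ} (m : ℕ) (hm : 0 < m)
    (A : ℕ → Matrix (Fin n) (Fin n) ℂ) (hA : IsUnit (A m).det)
    (k : ℝ) (hk : 1 ≤ k)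
    (htop : frobNorm (A (m - 1)) ≤ k * frobNorm (A m))
    (hchain : ∀ j, j + 1 < m → frobNorm (A j) ≤ frobNorm (A (j + 1)))
    (α : ℝ) (hα0 : 0 ≤ α) (hα : α ≤ Real.pi / 2)
    (C : Matrix (Fin n) (Fin n) ℂ) (hC : C ≠ 0)
    (hangle : ∀ j ≤ m,
        frobNorm (A j) * frobNorm C * Real.cos α
          ≤ (Matrix.trace (C.conjTranspose * A j)).re)
    (z : ℂ)
    (hz : (∑ j ∈ Finset.range (m + 1), z ^ j • A j).det = 0) :
    ‖z + (k : ℂ) - 1‖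
      ≤ frobNorm (A m)⁻¹
          * ((k * frobNorm (A m) - frobNorm (A 0)) * (Real.sin α + Real.cos α)
              + frobNorm (A 0)
              + 2 * Real.sin α * ∑ j ∈ Finset.range m, frobNorm (A j)) := by
  obtain ⟨M, rfl⟩ : ∃ M, m = M + 1 := ⟨m - 1, by omega⟩
  rw [Nat.add_sub_cancel] at htop
  simp only [frobNorm_eq_norm_toFrobeniusSpace, ← inner_toFrobeniusSpace] at htop hchain hangle
  have hpath := polygonalLength_le_of_cone (by linarith) (by simpa using hC) hα0 hα htop
    (fun j hj => hchain j (by omega)) hangle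
  simp only [← frobNorm_eq_norm_toFrobeniusSpace] at hpath
  exact (Matrix.norm_add_sub_one_le_frobNorm_inv_mul hA hz hk).trans
    (mul_le_mul_of_nonneg_left hpath (sqrt_nonneg _))
end

section
/- Let P(z) = Σ_{k=0}^m A_k z^k be a matrix polynomial with A_0 invertible. Set r₁ = min_{1 ≤ k ≤ m} { 2^{3(1−m)} C(2m, m+k) 𝒫_k² / (‖A_0^{-1}‖ ‖A_k‖) }^{1/k}, where 𝒫_k is the k-th Pell number. Then P has no eigenvalue in the open disk |z| < r₁. -/
/-!
If `P(λ) u = 0` with `u ≠ 0`, then `u = -A₀⁻¹ ∑_{k ≥ 1} λ^k A_k u`, so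
`1 ≤ ∑_{k=1}^m ‖A₀⁻¹‖ ‖A_k‖ |λ|^k`. The weights `w_k = 2^{3(1-m)} C(2m, m+k) 𝒫_k²` sum to `1`,
and `|λ| < r₁` would give `‖A₀⁻¹‖ ‖A_k‖ |λ|^k < w_k` whenever `A_k ≠ 0`, hence a sum `< 1`.

That the weights sum to `1` is the identity `∑_{k=1}^m C(2m, m+k) 𝒫_k² = 8^{m-1}`. With
`α, β = 1 ± √2` (so `αβ = -1`), Binet's formula `2√2 𝒫_k = α^k - β^k` gives
`8 𝒫_k² = α^{2k} + β^{2k} - 2(-1)^k`. The summand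
`C(2m, j) (α^j (-β)^{2m-j} + β^j (-α)^{2m-j} - 2(-1)^{j+m})` is symmetric about `j = m`, vanishes
there and equals `8 C(2m, m+k) 𝒫_k²` at `j = m + k`; by the binomial theorem its sum over
`0 ≤ j ≤ 2m` is `(α - β)^{2m} + (β - α)^{2m} = 2 · 8^m`.
-/

open Finset

theorem Finset.sum_Icc_one_eq_sum_range {M : Type*} [AddCommMonoid M] (f : ℕ → M) (m : ℕ) :
    ∑ k ∈ Icc 1 m, f k = ∑ k ∈ range m, f (k + 1) := by
  rw [range_eq_Ico, sum_Ico_add', ← Ico_add_one_right_eq_Icc]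

theorem Finset.sum_range_succ_eq_add_sum_Icc {M : Type*} [AddCommMonoid M] (f : ℕ → M) (m : ℕ) :
    ∑ k ∈ range (m + 1), f k = f 0 + ∑ k ∈ Icc 1 m, f k := by
  rw [sum_range_succ', add_comm, sum_Icc_one_eq_sum_range]

theorem Finset.sum_range_two_mul_add_one_of_symm {M : Type*} [AddCommMonoid M] (f : ℕ → M)
    (m : ℕ) (hf : ∀ k ≤ m, f (m - k) = f (m + k)) :
    ∑ j ∈ range (2 * m + 1), f j = f m + 2 • ∑ k ∈ Icc 1 m, f (m + k) := by
  have hlow : ∑ j ∈ range (m + 1), f j = ∑ j ∈ range (m + 1), f (m + j) := by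
    rw [← sum_range_reflect]
    exact sum_congr rfl fun j hj ↦ by
      rw [add_tsub_cancel_right]; exact hf j (Nat.lt_succ_iff.mp (mem_range.mp hj))
  rw [show 2 * m + 1 = (m + 1) + m by ring, sum_range_add, hlow, sum_range_succ',
    sum_Icc_one_eq_sum_range, two_nsmul]
  simp only [add_zero, add_assoc, add_comm 1]
  abel

theorem pow_add_mul_pow_sub_of_mul_eq_one {M : Type*} [CommMonoid M] {x y : M} (h : x * y = 1)
    {k m : ℕ} (hk : k ≤ m) : x ^ (m + k) * y ^ (m - k) = x ^ (2 * k) := by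
  rw [show m + k = 2 * k + (m - k) by omega, pow_add, mul_assoc, ← mul_pow, h, one_pow, mul_one]

section PellIdentity

variable {R : Type*} [CommRing R] {s : R}

theorem pell_binet (hs : s ^ 2 = 2) : ∀ k, 2 * s * pell k = (1 + s) ^ k - (1 - s) ^ k
  | 0 => by simp [pell]
  | 1 => by simp only [pell, Nat.cast_one]; ring
  | k + 2 => by
    have h₀ := pell_binet hs k
    have h₁ := pell_binet hs (k + 1)
    simp only [pell]
    push_cast
    linear_combination 2 * h₁ + h₀ + ((1 - s) ^ k - (1 + s) ^ k) * hs

theorem eight_mul_pell_sq (hs : s ^ 2 = 2) (k : ℕ) :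
    8 * (pell k : R) ^ 2 = (1 + s) ^ (2 * k) + (1 - s) ^ (2 * k) - 2 * (-1) ^ k := by
  have h : (2 * s * pell k) ^ 2 = ((1 + s) ^ k - (1 - s) ^ k) ^ 2 := by rw [pell_binet hs]
  have hαβ : (1 + s) * (1 - s) = -1 := by linear_combination -hs
  rw [pow_mul', pow_mul', ← hαβ, mul_pow]
  linear_combination h - 4 * (pell k : R) ^ 2 * hs

def pellBinomialTerm (s : R) (m j : ℕ) : R :=
  (2 * m).choose j * ((1 + s) ^ j * (-(1 - s)) ^ (2 * m - j)
    + (1 - s) ^ j * (-(1 + s)) ^ (2 * m - j) - 2 * (-1) ^ (j + m))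

theorem pellBinomialTerm_add (hs : s ^ 2 = 2) {m k : ℕ} (hk : k ≤ m) :
    pellBinomialTerm s m (m + k) = 8 * ((2 * m).choose (m + k) * pell k ^ 2) := by
  rw [mul_left_comm, eight_mul_pell_sq hs, pellBinomialTerm,
    show 2 * m - (m + k) = m - k by omega,
    pow_add_mul_pow_sub_of_mul_eq_one (by linear_combination hs) hk,
    pow_add_mul_pow_sub_of_mul_eq_one (by linear_combination hs) hk,
    show m + k + m = k + 2 * m by ring, pow_add, (even_two_mul m).neg_one_pow, mul_one]

theorem pellBinomialTerm_sub (hs : s ^ 2 = 2) {m k : ℕ} (hk : k ≤ m) :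
    pellBinomialTerm s m (m - k) = 8 * ((2 * m).choose (m + k) * pell k ^ 2) := by
  rw [mul_left_comm, eight_mul_pell_sq hs, pellBinomialTerm,
    show 2 * m - (m - k) = m + k by omega, mul_comm ((1 + s) ^ _), mul_comm ((1 - s) ^ _),
    pow_add_mul_pow_sub_of_mul_eq_one (by linear_combination hs) hk,
    pow_add_mul_pow_sub_of_mul_eq_one (by linear_combination hs) hk,
    (even_two_mul k).neg_pow, (even_two_mul k).neg_pow,
    show m - k + m = k + 2 * (m - k) by omega, pow_add, (even_two_mul _).neg_one_pow, mul_one,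
    Nat.choose_symm_of_eq_add (show 2 * m = m - k + (m + k) by omega), add_comm ((1 - s) ^ _)]

theorem sum_range_pellBinomialTerm (hs : s ^ 2 = 2) {m : ℕ} (hm : m ≠ 0) :
    ∑ j ∈ range (2 * m + 1), pellBinomialTerm s m j = 2 * 8 ^ m :=
  calc ∑ j ∈ range (2 * m + 1), pellBinomialTerm s m j
      = ((1 + s) + -(1 - s)) ^ (2 * m) + ((1 - s) + -(1 + s)) ^ (2 * m)
          - 2 * (-1) ^ m * (-1 + 1) ^ (2 * m) := by
        simp only [pellBinomialTerm, add_pow, mul_sum, ← sum_add_distrib, ← sum_sub_distrib]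
        exact sum_congr rfl fun j _ ↦ by ring
    _ = 2 * 8 ^ m := by
        rw [neg_add_cancel, zero_pow (by omega), pow_mul, pow_mul,
          show ((1 + s) + -(1 - s)) ^ 2 = 8 by linear_combination 4 * hs,
          show ((1 - s) + -(1 + s)) ^ 2 = 8 by linear_combination 4 * hs]
        ring

end PellIdentity

theorem sum_choose_mul_pell_sq {m : ℕ} (hm : 1 ≤ m) :
    ∑ k ∈ Icc 1 m, (2 * m).choose (m + k) * pell k ^ 2 = 8 ^ (m - 1) := by
  have hs : √2 ^ 2 = 2 := Real.sq_sqrt (by norm_num)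
  have htotal := sum_range_pellBinomialTerm hs (m := m) (by omega)
  have hmid := pellBinomialTerm_add hs (m := m) (Nat.zero_le m)
  rw [add_zero] at hmid
  rw [sum_range_two_mul_add_one_of_symm _ m fun k hk ↦ by
      rw [pellBinomialTerm_sub hs hk, pellBinomialTerm_add hs hk],
    sum_congr rfl fun k hk ↦ pellBinomialTerm_add hs (mem_Icc.mp hk).2, hmid] at htotal
  apply Nat.cast_injective (R := ℝ)
  push_cast
  rw [← pow_sub_mul_pow (8 : ℝ) hm] at htotal
  simp only [pell, ← mul_sum, nsmul_eq_mul] at htotal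
  linear_combination htotal / 16

theorem sum_pell_weights_eq_one {m : ℕ} (hm : 1 ≤ m) :
    ∑ k ∈ Icc 1 m, (2 : ℝ) ^ ((3 : ℤ) * (1 - (m : ℤ))) * (2 * m).choose (m + k) * pell k ^ 2
      = 1 := by
  have hsum : ∑ k ∈ Icc 1 m, ((2 * m).choose (m + k) : ℝ) * pell k ^ 2 = 8 ^ ((m : ℤ) - 1) := by
    rw [← Nat.cast_pred hm, zpow_natCast]
    exact_mod_cast sum_choose_mul_pell_sq hm
  simp_rw [mul_assoc, ← mul_sum]
  rw [hsum, zpow_mul, show (2 : ℝ) ^ (3 : ℤ) = 8 by norm_num, ← zpow_add₀ (by norm_num)]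
  simp

theorem ContinuousLinearMap.one_le_sum_norm_mul_pow
    {𝕜 E : Type*} [NontriviallyNormedField 𝕜] [NormedAddCommGroup E] [NormedSpace 𝕜 E]
    {m : ℕ} {T : ℕ → E →L[𝕜] E} {B : E →L[𝕜] E} (hB : B * T 0 = 1) {lam : 𝕜} {v : E}
    (hv : v ≠ 0) (h : ∑ k ∈ range (m + 1), lam ^ k • T k v = 0) :
    1 ≤ ∑ k ∈ Icc 1 m, ‖B‖ * ‖T k‖ * ‖lam‖ ^ k := by
  rw [sum_range_succ_eq_add_sum_Icc, pow_zero, one_smul] at h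
  have hT0 : ‖T 0 v‖ ≤ ∑ k ∈ Icc 1 m, ‖lam‖ ^ k * (‖T k‖ * ‖v‖) := by
    rw [eq_neg_of_add_eq_zero_left h, norm_neg]
    refine (norm_sum_le _ _).trans (sum_le_sum fun k _ ↦ ?_)
    rw [norm_smul, norm_pow]
    gcongr
    exact (T k).le_opNorm v
  have hv' : ‖v‖ ≤ (∑ k ∈ Icc 1 m, ‖B‖ * ‖T k‖ * ‖lam‖ ^ k) * ‖v‖ :=
    calc ‖v‖ = ‖B (T 0 v)‖ := by rw [show B (T 0 v) = v from DFunLike.congr_fun hB v]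
      _ ≤ ‖B‖ * ‖T 0 v‖ := B.le_opNorm _
      _ ≤ ‖B‖ * ∑ k ∈ Icc 1 m, ‖lam‖ ^ k * (‖T k‖ * ‖v‖) := by gcongr
      _ = (∑ k ∈ Icc 1 m, ‖B‖ * ‖T k‖ * ‖lam‖ ^ k) * ‖v‖ := by
        rw [mul_sum, sum_mul]
        exact sum_congr rfl fun k _ ↦ by ring
  exact le_of_mul_le_mul_right (by rwa [one_mul]) (norm_pos_iff.mpr hv)

theorem one_le_sum_opNorm_mul_pow_of_mulVec_eq_zero {n m : ℕ}
    {A : ℕ → Matrix (Fin n) (Fin n) ℂ} (hA0 : IsUnit (A 0).det) {lam : ℂ} {u : Fin n → ℂ}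
    (hu : u ≠ 0) (hlam : (∑ k ∈ range (m + 1), lam ^ k • A k).mulVec u = 0) :
    1 ≤ ∑ k ∈ Icc 1 m, opNorm (A 0)⁻¹ * opNorm (A k) * ‖lam‖ ^ k := by
  refine ContinuousLinearMap.one_le_sum_norm_mul_pow
    (T := fun k ↦ Matrix.toEuclideanCLM (𝕜 := ℂ) (A k)) (v := WithLp.toLp 2 u) ?_
    (by simpa using hu) ?_
  · rw [← map_mul, Matrix.nonsing_inv_mul _ hA0, map_one]
  · have h := congrArg (WithLp.toLp 2) hlam
    rw [← Matrix.toEuclideanCLM_toLp, map_sum] at h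
    simpa using h

theorem mul_pow_lt_of_lt_rpow_one_div {c w ρ : ℝ} {k : ℕ} (hk : k ≠ 0) (hρ : 0 ≤ ρ)
    (hc : 0 ≤ c) (hw : 0 ≤ w) (h : ρ < (w / c) ^ (1 / (k : ℝ))) : c * ρ ^ k < w := by
  rcases hc.eq_or_lt with rfl | hc
  · rw [div_zero, Real.zero_rpow (by positivity)] at h
    exact (hρ.not_gt h).elim
  rw [one_div, Real.lt_rpow_inv_iff_of_pos hρ (by positivity) (by positivity),
    Real.rpow_natCast, lt_div_iff₀ hc] at h
  linarith

/-- Theorem 3 (lower bound): with `A_0` invertible and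
`r₁ = min_k {2^{3(1−m)} C(2m,m+k) 𝒫_k² / (‖A_0⁻¹‖‖A_k‖)}^{1/k}` (the minimum taken
over `1 ≤ k ≤ m` with `‖A_k‖ ≠ 0`), the matrix polynomial `P(z) = ∑_k A_k z^k` has
no eigenvalue in `|z| < r₁`. -/
theorem matrixPoly_eigenvalue_lower_bound_pell {n : ℕ} (m : ℕ)
    (A : ℕ → Matrix (Fin n) (Fin n) ℂ) (hA0 : IsUnit (A 0).det)
    (hne : (((Finset.Icc 1 m)).filter fun k => opNorm (A k) ≠ 0).Nonempty)
    (r₁ : ℝ)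
    (hr₁ : r₁ = (((Finset.Icc 1 m)).filter fun k => opNorm (A k) ≠ 0).inf' hne
        fun k => ((2 : ℝ) ^ ((3 : ℤ) * (1 - (m : ℤ))) * (Nat.choose (2 * m) (m + k))
            * (pell k : ℝ) ^ 2 / (opNorm (A 0)⁻¹ * opNorm (A k)))
          ^ ((1 : ℝ) / k))
    (lam : ℂ) (u : Fin n → ℂ) (hu : u ≠ 0)
    (hlam : (∑ k ∈ Finset.range (m + 1), lam ^ k • A k).mulVec u = 0) :
    r₁ ≤ ‖lam‖ := by
  have hm : 1 ≤ m := by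
    obtain ⟨k, hk⟩ := hne
    simp only [mem_filter, mem_Icc] at hk
    omega
  have heig := one_le_sum_opNorm_mul_pow_of_mulVec_eq_zero hA0 hu hlam
  by_contra! hlt
  have hterm : ∀ k ∈ (Icc 1 m).filter fun k ↦ opNorm (A k) ≠ 0,
      opNorm (A 0)⁻¹ * opNorm (A k) * ‖lam‖ ^ k
        < (2 : ℝ) ^ ((3 : ℤ) * (1 - (m : ℤ))) * (2 * m).choose (m + k) * pell k ^ 2 := by
    intro k hk
    refine mul_pow_lt_of_lt_rpow_one_div ?_ (norm_nonneg _)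
      (mul_nonneg (norm_nonneg _) (norm_nonneg _))
      (by positivity) (hlt.trans_le (hr₁ ▸ inf'_le _ hk))
    simp only [mem_filter, mem_Icc] at hk
    omega
  have hsum_lt : ∑ k ∈ Icc 1 m, opNorm (A 0)⁻¹ * opNorm (A k) * ‖lam‖ ^ k < 1 :=
    calc _ = ∑ k ∈ (Icc 1 m).filter fun k ↦ opNorm (A k) ≠ 0,
          opNorm (A 0)⁻¹ * opNorm (A k) * ‖lam‖ ^ k := by
          rw [sum_filter_of_ne]
          intro k _ hk h
          simp [h] at hk
      _ < _ := sum_lt_sum_of_nonempty hne hterm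
      _ ≤ _ := sum_le_sum_of_subset_of_nonneg (filter_subset _ _) fun _ _ _ ↦ by positivity
      _ = 1 := sum_pell_weights_eq_one hm
  exact hsum_lt.not_ge heig
end

section
/- Let p(z) = Σ_{j=0}^m a_j z^j be a complex polynomial of degree m such that, for some k ≥ 1, k|a_m| ≥ |a_{m-1}| ≥ ... ≥ |a_1| ≥ |a_0|, and such that all coefficients a_j lie in the sector |arg(a_j) − β| ≤ α ≤ π/2 for some real β. Then every zero z of p satisfies |z + k − 1| ≤ (1/|a_m|)[ (k|a_m| − |a_0|)(sin α + cos α) + |a_0| + 2 sin α Σ_{j=0}^{m-1} |a_j| ]. -/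
/-!
Replacing `a m` by `k * a m` gives coefficients `b` of nondecreasing norm, all in the sector.
At a zero `z` of `p`, the Eneström–Kakeya identity
`(z - 1) ∑ b_j z^j = b_m z^(m+1) - ∑ (b_(j+1) - b_j) z^(j+1) - b_0` yields, for `1 ≤ ‖z‖`,
`‖a m‖ ‖z + k - 1‖ ≤ ∑ ‖b_(j+1) - b_j‖ + ‖b_0‖`; for `‖z‖ < 1` this holds because
`‖z + k - 1‖ < k`. Two numbers `u`, `v` of the sector with `‖v‖ ≤ ‖u‖` satisfy
`‖u - v‖ ≤ (‖u‖ - ‖v‖) cos α + (‖u‖ + ‖v‖) sin α`, and summing this over consecutive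
coefficients telescopes to the bound.
-/

open Complex ComplexConjugate Finset

namespace Complex

lemma norm_ofReal_mul_of_nonneg {r : ℝ} (hr : 0 ≤ r) (x : ℂ) : ‖(r : ℂ) * x‖ = r * ‖x‖ := by
  rw [norm_mul, norm_real, Real.norm_of_nonneg hr]

lemma re_mul_conj_eq_norm_mul_norm_mul_cos (a b : ℂ) :
    (a * conj b).re = ‖a‖ * ‖b‖ * Real.cos (arg a - arg b) := by
  rw [mul_re, conj_re, conj_im, Real.cos_sub, ← norm_mul_cos_arg a, ← norm_mul_cos_arg b,
    ← norm_mul_sin_arg a, ← norm_mul_sin_arg b]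
  ring

lemma norm_sub_le_of_abs_arg_sub_le {α β : ℝ} (hα0 : 0 ≤ α) (hα : α ≤ Real.pi / 2)
    {a b : ℂ} (hab : ‖b‖ ≤ ‖a‖) (ha : |arg a - β| ≤ α) (hb : |arg b - β| ≤ α) :
    ‖a - b‖ ≤ (‖a‖ - ‖b‖) * Real.cos α + (‖a‖ + ‖b‖) * Real.sin α := by
  have hs : 0 ≤ Real.sin α := Real.sin_nonneg_of_nonneg_of_le_pi hα0 (by linarith [Real.pi_pos])
  have hc : 0 ≤ Real.cos α := Real.cos_nonneg_of_mem_Icc ⟨by linarith [Real.pi_pos], hα⟩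
  have hcos : Real.cos (2 * α) ≤ Real.cos (arg a - arg b) := by
    rw [← Real.cos_abs (arg a - arg b)]
    refine Real.cos_le_cos_of_nonneg_of_le_pi (abs_nonneg _) (by linarith) ?_
    calc |arg a - arg b| = |(arg a - β) - (arg b - β)| := by ring_nf
      _ ≤ |arg a - β| + |arg b - β| := abs_sub _ _
      _ ≤ 2 * α := by linarith
  -- The square of the right side exceeds `‖a‖² + ‖b‖² - 2 ‖a‖ ‖b‖ cos 2α`
  -- by `2 (‖a‖² - ‖b‖²) sin α cos α ≥ 0`.
  have hsq : ‖a - b‖ ^ 2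
      ≤ ((‖a‖ - ‖b‖) * Real.cos α + (‖a‖ + ‖b‖) * Real.sin α) ^ 2 := by
    rw [← normSq_eq_norm_sq, normSq_sub, normSq_eq_norm_sq, normSq_eq_norm_sq,
      re_mul_conj_eq_norm_mul_norm_mul_cos]
    rw [Real.cos_two_mul'] at hcos
    nlinarith [Real.sin_sq_add_cos_sq α, mul_le_mul_of_nonneg_left hcos
      (mul_nonneg (norm_nonneg a) (norm_nonneg b)), mul_nonneg (mul_nonneg hs hc)
      (mul_nonneg (sub_nonneg.2 hab) (add_nonneg (norm_nonneg a) (norm_nonneg b)))]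
  exact le_of_pow_le_pow_left₀ two_ne_zero
    (by nlinarith [norm_nonneg b, mul_nonneg (sub_nonneg.2 hab) hc]) hsq

lemma sum_norm_sub_le_of_abs_arg_sub_le {α β : ℝ} (hα0 : 0 ≤ α) (hα : α ≤ Real.pi / 2)
    {b : ℕ → ℂ} {m : ℕ} (hmono : ∀ j < m, ‖b j‖ ≤ ‖b (j + 1)‖)
    (hsector : ∀ j ≤ m, |arg (b j) - β| ≤ α) :
    ∑ j ∈ range m, ‖b (j + 1) - b j‖
      ≤ (‖b m‖ - ‖b 0‖) * (Real.sin α + Real.cos α)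
        + 2 * Real.sin α * ∑ j ∈ range m, ‖b j‖ := by
  calc ∑ j ∈ range m, ‖b (j + 1) - b j‖
      ≤ ∑ j ∈ range m, ((‖b (j + 1)‖ - ‖b j‖) * Real.cos α
          + (‖b (j + 1)‖ + ‖b j‖) * Real.sin α) := by
        refine sum_le_sum fun j hj => ?_
        have hj : j < m := mem_range.1 hj
        exact norm_sub_le_of_abs_arg_sub_le hα0 hα (hmono j hj) (hsector _ hj) (hsector _ hj.le)
    _ = (∑ j ∈ range m, (‖b (j + 1)‖ - ‖b j‖)) * (Real.sin α + Real.cos α)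
          + 2 * Real.sin α * ∑ j ∈ range m, ‖b j‖ := by
        rw [sum_mul, mul_sum, ← sum_add_distrib]
        exact sum_congr rfl fun j _ => by ring
    _ = _ := by rw [sum_range_sub (fun j => ‖b j‖)]

lemma norm_add_sub_one_lt {z : ℂ} (hz : ‖z‖ < 1) {k : ℝ} (hk : 1 ≤ k) :
    ‖z + (k : ℂ) - 1‖ < k := by
  calc ‖z + (k : ℂ) - 1‖ = ‖z + ((k - 1 : ℝ) : ℂ)‖ := by push_cast; ring_nf
    _ ≤ ‖z‖ + (k - 1) := (norm_add_le _ _).trans_eq <| by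
        rw [norm_real, Real.norm_of_nonneg (sub_nonneg.2 hk)]
    _ < k := by linarith

end Complex

lemma sub_one_mul_sum_range_succ_mul_pow {R : Type*} [CommRing R] (b : ℕ → R) (z : R) (m : ℕ) :
    (z - 1) * ∑ j ∈ range (m + 1), b j * z ^ j
      = b m * z ^ (m + 1) - ∑ j ∈ range m, (b (j + 1) - b j) * z ^ (j + 1) - b 0 := by
  induction m with
  | zero => simp; ring
  | succ m ih => rw [sum_range_succ, mul_add, ih, sum_range_succ]; ring

lemma norm_mul_pow_sub_sub_one_mul_sum_le {𝕜 : Type*} [NormedField 𝕜] (b : ℕ → 𝕜) (m : ℕ)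
    {z : 𝕜} (hz : 1 ≤ ‖z‖) :
    ‖b m * z ^ (m + 1) - (z - 1) * ∑ j ∈ range (m + 1), b j * z ^ j‖
      ≤ (∑ j ∈ range m, ‖b (j + 1) - b j‖ + ‖b 0‖) * ‖z‖ ^ m := by
  have hpow : ∀ i ≤ m, ‖z‖ ^ i ≤ ‖z‖ ^ m := fun i hi => pow_le_pow_right₀ hz hi
  rw [sub_one_mul_sum_range_succ_mul_pow, sub_sub, sub_sub_cancel, add_mul, sum_mul]
  refine (norm_add_le _ _).trans (add_le_add ((norm_sum_le _ _).trans (sum_le_sum ?_)) ?_)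
  · intro j hj
    rw [norm_mul, norm_pow]
    exact mul_le_mul_of_nonneg_left (hpow _ (mem_range.1 hj)) (norm_nonneg _)
  · simpa using mul_le_mul_of_nonneg_left (hpow 0 (Nat.zero_le m)) (norm_nonneg (b 0))

lemma norm_le_sum_norm_sub_add_norm {E : Type*} [SeminormedAddCommGroup E] (b : ℕ → E) (m : ℕ) :
    ‖b m‖ ≤ ∑ j ∈ range m, ‖b (j + 1) - b j‖ + ‖b 0‖ := by
  calc ‖b m‖ = ‖∑ j ∈ range m, (b (j + 1) - b j) + b 0‖ := by rw [sum_range_sub, sub_add_cancel]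
    _ ≤ _ := (norm_add_le _ _).trans (add_le_add_left (norm_sum_le _ _) _)

section ScaledTop

variable {a b : ℕ → ℂ} {m : ℕ} {k : ℝ}

lemma norm_mul_norm_add_sub_one_le_of_scaled_top (hk : 1 ≤ k) (hb_low : ∀ j < m, b j = a j)
    (hbm : b m = k * a m) {z : ℂ} (hz : ∑ j ∈ range (m + 1), a j * z ^ j = 0) :
    ‖a m‖ * ‖z + (k : ℂ) - 1‖ ≤ ∑ j ∈ range m, ‖b (j + 1) - b j‖ + ‖b 0‖ := by
  rcases lt_or_ge ‖z‖ 1 with hz1 | hz1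
  · calc ‖a m‖ * ‖z + (k : ℂ) - 1‖ ≤ ‖a m‖ * k :=
          mul_le_mul_of_nonneg_left (norm_add_sub_one_lt hz1 hk).le (norm_nonneg _)
      _ = ‖b m‖ := by rw [hbm, norm_ofReal_mul_of_nonneg (by linarith), mul_comm]
      _ ≤ _ := norm_le_sum_norm_sub_add_norm b m
  · have hlow : ∑ j ∈ range m, b j * z ^ j = ∑ j ∈ range m, a j * z ^ j :=
      sum_congr rfl fun j hj => by rw [hb_low j (mem_range.1 hj)]
    have hkey : b m * z ^ (m + 1) - (z - 1) * ∑ j ∈ range (m + 1), b j * z ^ j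
        = a m * z ^ m * (z + k - 1) := by
      rw [sum_range_succ] at hz
      rw [sum_range_succ, hlow, hbm]
      linear_combination (1 - z) * hz
    have hbound := norm_mul_pow_sub_sub_one_mul_sum_le b m hz1
    rw [hkey, norm_mul, norm_mul, norm_pow, mul_right_comm] at hbound
    exact le_of_mul_le_mul_right hbound (pow_pos (zero_lt_one.trans_le hz1) m)

lemma norm_le_norm_succ_of_scaled_top (hk : 0 ≤ k) (hb_low : ∀ j < m, b j = a j)
    (hbm : b m = k * a m) (htop : ‖a (m - 1)‖ ≤ k * ‖a m‖)
    (hchain : ∀ j, j + 1 < m → ‖a j‖ ≤ ‖a (j + 1)‖) :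
    ∀ j < m, ‖b j‖ ≤ ‖b (j + 1)‖ := by
  intro j hj
  rw [hb_low j hj]
  by_cases hj' : j + 1 < m
  · rw [hb_low _ hj']; exact hchain j hj'
  · rw [show j + 1 = m by omega, hbm, norm_ofReal_mul_of_nonneg hk, show j = m - 1 by omega]
    exact htop

lemma abs_arg_sub_le_of_scaled_top {α β : ℝ} (hk : 0 < k) (hb_low : ∀ j < m, b j = a j)
    (hbm : b m = k * a m) (hsector : ∀ j ≤ m, |arg (a j) - β| ≤ α) :
    ∀ j ≤ m, |arg (b j) - β| ≤ α := by
  intro j hj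
  rcases hj.lt_or_eq with hj | rfl
  · rw [hb_low j hj]; exact hsector j hj.le
  · rw [hbm, arg_real_mul _ hk]; exact hsector j le_rfl

end ScaledTop

/-- Scalar case of Theorem 2 (Shah–Liman): if `k ≥ 1`,
`k|a_m| ≥ |a_{m-1}| ≥ ⋯ ≥ |a_0|`, and all coefficients lie in the sector
`|arg(a_j) − β| ≤ α ≤ π/2`, then every zero `z` of `p(z) = ∑_{j=0}^m a_j z^j`
satisfies `|z + k − 1| ≤ (1/|a_m|)[(k|a_m| − |a_0|)(sin α + cos α) + |a_0|
  + 2 sin α ∑_{j=0}^{m-1} |a_j|]`. -/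
theorem scalar_shah_liman (m : ℕ) (hm : 0 < m) (a : ℕ → ℂ) (ham : a m ≠ 0)
    (k : ℝ) (hk : 1 ≤ k)
    (htop : ‖a (m - 1)‖ ≤ k * ‖a m‖)
    (hchain : ∀ j, j + 1 < m → ‖a j‖ ≤ ‖a (j + 1)‖)
    (α β : ℝ) (hα0 : 0 ≤ α) (hα : α ≤ Real.pi / 2)
    (hsector : ∀ j ≤ m, |Complex.arg (a j) - β| ≤ α)
    (z : ℂ) (hz : ∑ j ∈ Finset.range (m + 1), a j * z ^ j = 0) :
    ‖z + (k : ℂ) - 1‖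
      ≤ (1 / ‖a m‖)
          * ((k * ‖a m‖ - ‖a 0‖)
                * (Real.sin α + Real.cos α)
              + ‖a 0‖
              + 2 * Real.sin α * ∑ j ∈ Finset.range m, ‖a j‖) := by
  obtain ⟨b, hb_low, hbm⟩ : ∃ b : ℕ → ℂ, (∀ j < m, b j = a j) ∧ b m = k * a m :=
    ⟨Function.update a m (k * a m), fun j hj => Function.update_of_ne hj.ne .., by simp⟩
  have hsum := sum_norm_sub_le_of_abs_arg_sub_le hα0 hα
    (norm_le_norm_succ_of_scaled_top (by linarith) hb_low hbm htop hchain)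
    (abs_arg_sub_le_of_scaled_top (by linarith) hb_low hbm hsector)
  have hsum_low : ∑ j ∈ range m, ‖b j‖ = ∑ j ∈ range m, ‖a j‖ :=
    sum_congr rfl fun j hj => by rw [hb_low j (mem_range.1 hj)]
  rw [hbm, norm_ofReal_mul_of_nonneg (by linarith), hb_low 0 hm, hsum_low] at hsum
  have hbound := norm_mul_norm_add_sub_one_le_of_scaled_top hk hb_low hbm hz
  rw [hb_low 0 hm] at hbound
  rw [one_div, inv_mul_eq_div, le_div_iff₀ (norm_pos_iff.2 ham)]
  linarith
end
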